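/- arXiv:1310.0097 — 7 statements merged into one kernel-verified Lean document; each statement's English description precedes it below -/
import Mathlib

section
/- For every s ≥ 0 and every real α, the integral ∫_{α-π/2}^{α+π/2} (s·sin²θ·cosθ)/(1+s²cos²θ)^{5/2} dθ equals (2/3)·s·cos³α / ((1+s²)·(1+s²sin²α)^{3/2}). -/
open Real

/-! With `g θ = 1 + c cos² θ`, the derivative of `sin³ θ · g θ ^ (-3/2)` is
`3 sin² θ cos θ (g θ + c sin² θ) / g θ ^ (5/2) = 3 (1 + c) sin² θ cos θ / g θ ^ (5/2)`,
so the integral is evaluated by the fundamental theorem of calculus; at `α ± π/2` this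
antiderivative equals `± cos³ α (1 + c sin² α) ^ (-3/2)`. Take `c = s²`. -/

section

variable {c : ℝ}

lemma hasDerivAt_sin_pow_three_mul_rpow_div (hc : 0 ≤ c) (θ : ℝ) :
    HasDerivAt (fun θ => sin θ ^ 3 * (1 + c * cos θ ^ 2) ^ (-(3 / 2 : ℝ)) / (3 * (1 + c)))
      (sin θ ^ 2 * cos θ / (1 + c * cos θ ^ 2) ^ (5 / 2 : ℝ)) θ := by
  have hg : 0 < 1 + c * cos θ ^ 2 := by positivity
  have hinner : HasDerivAt (fun θ => 1 + c * cos θ ^ 2) (c * (2 * cos θ * -sin θ)) θ := by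
    simpa using (((hasDerivAt_cos θ).pow 2).const_mul c).const_add 1
  refine ((((hasDerivAt_sin θ).pow 3).mul
    (hinner.rpow_const (p := -(3 / 2 : ℝ)) (Or.inl hg.ne'))).div_const _).congr_deriv ?_
  have hsplit : (1 + c * cos θ ^ 2) ^ (-(3 / 2 : ℝ))
      = (1 + c * cos θ ^ 2) * ((1 + c * cos θ ^ 2) ^ (5 / 2 : ℝ))⁻¹ := by
    rw [← rpow_neg hg.le, ← rpow_one_add' hg.le (by norm_num)]
    norm_num
  rw [hsplit, show -(3 / 2 : ℝ) - 1 = -(5 / 2) by norm_num, rpow_neg hg.le]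
  simp only [Pi.pow_apply]
  have hc1 : 0 < 1 + c := by positivity
  field_simp
  linear_combination (3 * c * sin θ ^ 2 * cos θ) * sin_sq_add_cos_sq θ

lemma continuous_sin_sq_mul_cos_div_rpow (hc : 0 ≤ c) (p : ℝ) :
    Continuous fun θ => sin θ ^ 2 * cos θ / (1 + c * cos θ ^ 2) ^ p := by
  have hg (θ : ℝ) : 0 < 1 + c * cos θ ^ 2 := by positivity
  refine Continuous.div (by fun_prop) ?_ fun θ => (rpow_pos_of_pos (hg θ) p).ne'
  exact (by fun_prop : Continuous fun θ => 1 + c * cos θ ^ 2).rpow_const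
    fun θ => Or.inl (hg θ).ne'

lemma integral_sin_sq_mul_cos_div_rpow (hc : 0 ≤ c) (α : ℝ) :
    ∫ θ in (α - π / 2)..(α + π / 2),
        sin θ ^ 2 * cos θ / (1 + c * cos θ ^ 2) ^ (5 / 2 : ℝ)
      = 2 / 3 * cos α ^ 3 / ((1 + c) * (1 + c * sin α ^ 2) ^ (3 / 2 : ℝ)) := by
  rw [intervalIntegral.integral_eq_sub_of_hasDerivAt
    (fun θ _ => hasDerivAt_sin_pow_three_mul_rpow_div hc θ)
    ((continuous_sin_sq_mul_cos_div_rpow hc _).intervalIntegrable _ _)]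
  simp only [sin_add_pi_div_two, cos_add_pi_div_two, sin_sub_pi_div_two, cos_sub_pi_div_two]
  have hB : 0 < 1 + c * sin α ^ 2 := by positivity
  have hc1 : 0 < 1 + c := by positivity
  rw [neg_sq, rpow_neg hB.le]
  field_simp
  ring

end

theorem stmt_0_general (s α : ℝ) :
    ∫ θ in (α - π/2)..(α + π/2),
        s * sin θ ^ 2 * cos θ / (1 + s ^ 2 * cos θ ^ 2) ^ ((5 : ℝ)/2)
      = (2/3) * s * cos α ^ 3 /
          ((1 + s ^ 2) * (1 + s ^ 2 * sin α ^ 2) ^ ((3 : ℝ)/2)) := by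
  calc _ = s * ∫ θ in (α - π / 2)..(α + π / 2),
          sin θ ^ 2 * cos θ / (1 + s ^ 2 * cos θ ^ 2) ^ (5 / 2 : ℝ) := by
        rw [← intervalIntegral.integral_const_mul]
        congr 1 with θ
        ring
    _ = _ := by
        rw [integral_sin_sq_mul_cos_div_rpow (sq_nonneg s)]
        ring

theorem stmt_0 (s α : ℝ) (hs : 0 ≤ s) :
    ∫ θ in (α - π/2)..(α + π/2),
        s * sin θ ^ 2 * cos θ / (1 + s ^ 2 * cos θ ^ 2) ^ ((5 : ℝ)/2)
      = (2/3) * s * cos α ^ 3 /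
          ((1 + s ^ 2) * (1 + s ^ 2 * sin α ^ 2) ^ ((3 : ℝ)/2)) :=
  stmt_0_general s α
end

section
/- For every s ≥ 0 and every real α, the integral ∫_{α-π/2}^{α+π/2} (s·sinθ·cos²θ)/(1+s²cos²θ)^{5/2} dθ equals (2/3)·s·sin³α / (1+s²sin²α)^{3/2}. -/
/-!
The key identity is `d/du [u³ (1 + s²u²)^(-3/2)] = 3u² (1 + s²u²)^(-5/2)`, so substituting
`u = cos θ` the integrand has the primitive `-(s/3) cos³θ (1 + s² cos²θ)^(-3/2)`. At the endpoints
`cos (α ± π/2) = ∓ sin α`, and the primitive is odd in `cos θ`, which produces the factor `2/3`.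
-/

open Real

lemma hasDerivAt_pow_three_div_rpow (s u : ℝ) :
    HasDerivAt (fun u : ℝ => u ^ 3 / (1 + s ^ 2 * u ^ 2) ^ ((3 : ℝ) / 2))
      (3 * u ^ 2 / (1 + s ^ 2 * u ^ 2) ^ ((5 : ℝ) / 2)) u := by
  have hb : 0 < 1 + s ^ 2 * u ^ 2 := by positivity
  have hb' : HasDerivAt (fun u : ℝ => 1 + s ^ 2 * u ^ 2) (s ^ 2 * (2 * u)) u := by
    simpa using ((hasDerivAt_pow 2 u).const_mul (s ^ 2)).const_add 1
  refine ((hasDerivAt_pow 3 u).div (hb'.rpow_const (p := 3 / 2) (.inl hb.ne'))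
    (rpow_pos_of_pos hb _).ne').congr_deriv ?_
  generalize hb_def : 1 + s ^ 2 * u ^ 2 = b at hb ⊢
  have h32 : b ^ ((3 : ℝ) / 2) = b ^ ((1 : ℝ) / 2) * b := by
    rw [← rpow_add_one hb.ne']; norm_num
  have h52 : b ^ ((5 : ℝ) / 2) = b ^ ((1 : ℝ) / 2) * b * b := by
    rw [← h32, ← rpow_add_one hb.ne']; norm_num
  have hr : 0 < b ^ ((1 : ℝ) / 2) := rpow_pos_of_pos hb _
  rw [show (3 : ℝ) / 2 - 1 = 1 / 2 by norm_num, h32, h52]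
  field_simp
  linear_combination (-3 * u ^ 2) * hb_def

lemma hasDerivAt_cos_pow_three_div_rpow (s θ : ℝ) :
    HasDerivAt (fun θ : ℝ => -(s / 3) * (cos θ ^ 3 / (1 + s ^ 2 * cos θ ^ 2) ^ ((3 : ℝ) / 2)))
      (s * sin θ * cos θ ^ 2 / (1 + s ^ 2 * cos θ ^ 2) ^ ((5 : ℝ) / 2)) θ := by
  refine (((hasDerivAt_pow_three_div_rpow s (cos θ)).comp θ (hasDerivAt_cos θ)).const_mul
    (-(s / 3))).congr_deriv ?_
  ring

lemma continuous_sin_mul_cos_sq_div_rpow (s : ℝ) :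
    Continuous fun θ : ℝ => s * sin θ * cos θ ^ 2 / (1 + s ^ 2 * cos θ ^ 2) ^ ((5 : ℝ) / 2) := by
  have hb (θ : ℝ) : 0 < 1 + s ^ 2 * cos θ ^ 2 := by positivity
  exact (by fun_prop : Continuous fun θ => s * sin θ * cos θ ^ 2).div
    ((by fun_prop : Continuous fun θ => 1 + s ^ 2 * cos θ ^ 2).rpow_const
      fun θ => .inl (hb θ).ne')
    fun θ => (rpow_pos_of_pos (hb θ) _).ne'

theorem stmt_1_general (s α : ℝ) :
    ∫ θ in (α - π/2)..(α + π/2),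
        s * sin θ * cos θ ^ 2 / (1 + s ^ 2 * cos θ ^ 2) ^ ((5 : ℝ)/2)
      = (2/3) * s * sin α ^ 3 / (1 + s ^ 2 * sin α ^ 2) ^ ((3 : ℝ)/2) := by
  rw [intervalIntegral.integral_eq_sub_of_hasDerivAt
    (fun θ _ => hasDerivAt_cos_pow_three_div_rpow s θ)
    ((continuous_sin_mul_cos_sq_div_rpow s).intervalIntegrable _ _)]
  simp only [cos_add_pi_div_two, cos_sub_pi_div_two, neg_sq]
  ring

theorem stmt_1 (s α : ℝ) (hs : 0 ≤ s) :
    ∫ θ in (α - π/2)..(α + π/2),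
        s * sin θ * cos θ ^ 2 / (1 + s ^ 2 * cos θ ^ 2) ^ ((5 : ℝ)/2)
      = (2/3) * s * sin α ^ 3 / (1 + s ^ 2 * sin α ^ 2) ^ ((3 : ℝ)/2) :=
  stmt_1_general s α
end

section
/- For every s ≥ 0 and every real α, the integral ∫_{α-π/2}^{α+π/2} (s·cos³θ)/(1+s²cos²θ)^{5/2} dθ equals (2/3)·s·cosα·(2+sin²α+3s²sin²α) / ((1+s²)²·(1+s²sin²α)^{3/2}). -/
/-!
Substituting `u = sin θ` turns the integrand into `s (1 - u²) / (1 + s² - s² u²)^{5/2} du`, which has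
the algebraic antiderivative `(a u - b u³) / (1 + s² - s² u²)^{3/2}` with `a = s / (1 + s²)` and
`b = s (1 + 3 s²) / (3 (1 + s²)²)`. In `θ` this antiderivative changes sign under `θ ↦ θ + π`, so the
integral is twice its value at `α + π/2`, where `sin θ = cos α` and `cos² θ = sin² α`.
-/

open Real

noncomputable def j₃Antideriv (s θ : ℝ) : ℝ :=
  (s / (1 + s ^ 2) * sin θ - s * (1 + 3 * s ^ 2) / (3 * (1 + s ^ 2) ^ 2) * sin θ ^ 3)
    / (1 + s ^ 2 * cos θ ^ 2) ^ ((3 : ℝ) / 2)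

lemma hasDerivAt_j₃Antideriv (s θ : ℝ) :
    HasDerivAt (j₃Antideriv s)
      (s * cos θ ^ 3 / (1 + s ^ 2 * cos θ ^ 2) ^ ((5 : ℝ) / 2)) θ := by
  have hD : 0 < 1 + s ^ 2 * cos θ ^ 2 := by positivity
  set D := 1 + s ^ 2 * cos θ ^ 2
  have hD' : HasDerivAt (fun θ => 1 + s ^ 2 * cos θ ^ 2) (-(2 * s ^ 2 * cos θ * sin θ)) θ := by
    refine (((hasDerivAt_cos θ).pow 2).const_mul (s ^ 2)).const_add 1 |>.congr_deriv ?_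
    ring
  have hN : HasDerivAt (fun θ =>
        s / (1 + s ^ 2) * sin θ - s * (1 + 3 * s ^ 2) / (3 * (1 + s ^ 2) ^ 2) * sin θ ^ 3)
      (s / (1 + s ^ 2) * cos θ
        - s * (1 + 3 * s ^ 2) / (3 * (1 + s ^ 2) ^ 2) * (3 * sin θ ^ 2 * cos θ)) θ := by
    refine ((hasDerivAt_sin θ).const_mul _).sub (((hasDerivAt_sin θ).pow 3).const_mul _)
      |>.congr_deriv ?_
    ring
  have ht : D ^ ((3 : ℝ) / 2) ≠ 0 := (rpow_pos_of_pos hD _).ne'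
  refine (hN.div (hD'.rpow_const (p := 3 / 2) (Or.inl hD.ne')) ht).congr_deriv ?_
  rw [rpow_sub_one hD.ne', show (5 : ℝ) / 2 = 3 / 2 + 1 by norm_num, rpow_add_one hD.ne']
  have hs : (1 + s ^ 2) ≠ 0 := by positivity
  field_simp
  linear_combination (D ^ ((3 : ℝ) / 2)) ^ 2 * s * cos θ *
    (s ^ 2 * ((1 + s ^ 2) - (1 + 3 * s ^ 2) * sin θ ^ 2) - (1 + s ^ 2) ^ 2) * sin_sq_add_cos_sq θ

lemma j₃Antideriv_sub_pi_div_two (s α : ℝ) :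
    j₃Antideriv s (α - π / 2) = -j₃Antideriv s (α + π / 2) := by
  simp only [j₃Antideriv, sin_sub_pi_div_two, cos_sub_pi_div_two, sin_add_pi_div_two,
    cos_add_pi_div_two, neg_sq]
  ring

lemma continuous_mul_cos_pow_three_div_rpow (s : ℝ) :
    Continuous fun θ => s * cos θ ^ 3 / (1 + s ^ 2 * cos θ ^ 2) ^ ((5 : ℝ) / 2) :=
  (by fun_prop : Continuous fun θ => s * cos θ ^ 3).div
    ((by fun_prop : Continuous fun θ => 1 + s ^ 2 * cos θ ^ 2).rpow_const
      fun _ => Or.inr (by norm_num))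
    fun θ => (rpow_pos_of_pos (by positivity) _).ne'

theorem stmt_2_general (s α : ℝ) :
    ∫ θ in (α - π/2)..(α + π/2),
        s * cos θ ^ 3 / (1 + s ^ 2 * cos θ ^ 2) ^ ((5 : ℝ)/2)
      = (2/3) * s * cos α * (2 + sin α ^ 2 + 3 * s ^ 2 * sin α ^ 2) /
          ((1 + s ^ 2) ^ 2 * (1 + s ^ 2 * sin α ^ 2) ^ ((3 : ℝ)/2)) := by
  rw [intervalIntegral.integral_eq_sub_of_hasDerivAt (fun θ _ => hasDerivAt_j₃Antideriv s θ)
    ((continuous_mul_cos_pow_three_div_rpow s).intervalIntegrable _ _), j₃Antideriv_sub_pi_div_two,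
    sub_neg_eq_add, j₃Antideriv, sin_add_pi_div_two, cos_add_pi_div_two, neg_sq]
  have : (1 + s ^ 2 * sin α ^ 2) ^ ((3 : ℝ) / 2) ≠ 0 := (rpow_pos_of_pos (by positivity) _).ne'
  have : 1 + s ^ 2 ≠ 0 := by positivity
  field_simp
  linear_combination (-2 * s * cos α * (1 + 3 * s ^ 2)) * sin_sq_add_cos_sq α

theorem stmt_2 (s α : ℝ) (hs : 0 ≤ s) :
    ∫ θ in (α - π/2)..(α + π/2),
        s * cos θ ^ 3 / (1 + s ^ 2 * cos θ ^ 2) ^ ((5 : ℝ)/2)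
      = (2/3) * s * cos α * (2 + sin α ^ 2 + 3 * s ^ 2 * sin α ^ 2) /
          ((1 + s ^ 2) ^ 2 * (1 + s ^ 2 * sin α ^ 2) ^ ((3 : ℝ)/2)) :=
  stmt_2_general s α
end

section
/- Let ν : ℝ → ℝ be continuously differentiable, even, positive, with ν increasing on [0,∞). Define for s > 0: g(s) = 1 − (3/2)·s·∫_{−π/2}^{π/2} (ν'(s·cosθ)/ν(s·cosθ)⁴)·sin²θ dθ and h(s) = −(3/2)·s·∫_{−π/2}^{π/2} (ν'(s·cosθ)/ν(s·cosθ)⁴)·cos²θ dθ. Then h(s) = s·g'(s) for all s > 0. -/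
/-!
With `f = ν' / ν⁴` and `F` a primitive of `f`, integration by parts against `sin` gives
`t ∫ f(t cos θ) sin²θ dθ = ∫ F(t cos θ) cos θ dθ - 2 F(0)`. Differentiating the right-hand side
under the integral sign only differentiates `F`, and yields `∫ f(t cos θ) cos²θ dθ`; hence
`g'(s) = -(3/2) ∫ f(s cos θ) cos²θ dθ`, which is `h(s) / s`.
-/

open Real intervalIntegral Metric

section PrimitiveAlongCos

variable {f F : ℝ → ℝ}

theorem integral_comp_mul_cos_mul_cos_eq (hf : Continuous f) (hF : ∀ x, HasDerivAt F (f x) x)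
    (t : ℝ) :
    ∫ θ in (-(π/2))..(π/2), F (t * cos θ) * cos θ
      = 2 * F 0 + t * ∫ θ in (-(π/2))..(π/2), f (t * cos θ) * sin θ ^ 2 := by
  have hu : ∀ θ ∈ Set.uIcc (-(π/2)) (π/2),
      HasDerivAt (fun θ => F (t * cos θ)) (f (t * cos θ) * (t * -sin θ)) θ :=
    fun θ _ => (hF _).comp θ ((hasDerivAt_cos θ).const_mul t)
  have hparts := integral_mul_deriv_eq_deriv_mul hu (fun θ _ => hasDerivAt_sin θ)
    (by apply Continuous.intervalIntegrable; fun_prop) (continuous_cos.intervalIntegrable _ _)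
  simp only [cos_pi_div_two, cos_neg, sin_pi_div_two, sin_neg, mul_zero] at hparts
  have hintegrand : ∀ θ, f (t * cos θ) * (t * -sin θ) * sin θ
      = -(t * (f (t * cos θ) * sin θ ^ 2)) := fun θ => by ring
  simp only [hparts, hintegrand, integral_neg, integral_const_mul]
  ring

theorem hasDerivAt_integral_comp_mul_cos_mul_cos (hf : Continuous f)
    (hF : ∀ x, HasDerivAt F (f x) x) (s : ℝ) :
    HasDerivAt (fun t => ∫ θ in (-(π/2))..(π/2), F (t * cos θ) * cos θ)
      (∫ θ in (-(π/2))..(π/2), f (s * cos θ) * cos θ ^ 2) s := by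
  have hFc : Continuous F := continuous_iff_continuousAt.2 fun x => (hF x).continuousAt
  obtain ⟨C, hC⟩ :=
    (isCompact_closedBall (0 : ℝ) (‖s‖ + 1)).exists_bound_of_continuousOn hf.continuousOn
  have hbound : ∀ θ, ∀ x ∈ ball s 1, ‖f (x * cos θ) * cos θ ^ 2‖ ≤ C := by
    intro θ x hx
    have hx' : ‖x * cos θ‖ ≤ ‖s‖ + 1 := by
      rw [norm_mul]
      calc ‖x‖ * ‖cos θ‖ ≤ ‖x‖ := mul_le_of_le_one_right (norm_nonneg x) (abs_cos_le_one θ)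
        _ ≤ ‖s‖ + 1 := by
          have := norm_le_norm_add_norm_sub' x s
          rw [mem_ball_iff_norm] at hx
          linarith
    have hcos : ‖cos θ ^ 2‖ ≤ 1 := by
      rw [norm_pow]; exact pow_le_one₀ (norm_nonneg _) (abs_cos_le_one θ)
    calc ‖f (x * cos θ) * cos θ ^ 2‖ = ‖f (x * cos θ)‖ * ‖cos θ ^ 2‖ := norm_mul _ _
      _ ≤ C * 1 := mul_le_mul (hC _ (mem_closedBall_zero_iff.2 hx')) hcos (norm_nonneg _)
          ((norm_nonneg _).trans (hC _ (mem_closedBall_zero_iff.2 hx')))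
      _ = C := mul_one C
  have hderiv : ∀ θ, ∀ x ∈ ball s 1, HasDerivAt (fun t => F (t * cos θ) * cos θ)
      (f (x * cos θ) * cos θ ^ 2) x := fun θ x _ => by
    have := ((hF (x * cos θ)).comp x (hasDerivAt_mul_const (cos θ))).mul_const (cos θ)
    exact this.congr_deriv (by ring)
  exact (hasDerivAt_integral_of_dominated_loc_of_deriv_le (ball_mem_nhds s one_pos)
    (Filter.Eventually.of_forall fun x =>
      (Continuous.aestronglyMeasurable (by fun_prop)).restrict)
    (Continuous.intervalIntegrable (by fun_prop) _ _)
    (Continuous.aestronglyMeasurable (by fun_prop)).restrict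
    (Filter.Eventually.of_forall fun θ _ => hbound θ) intervalIntegrable_const
    (Filter.Eventually.of_forall fun θ _ => hderiv θ)).2

theorem hasDerivAt_mul_integral_comp_mul_cos_mul_sin_sq (hf : Continuous f) (s : ℝ) :
    HasDerivAt (fun t => t * ∫ θ in (-(π/2))..(π/2), f (t * cos θ) * sin θ ^ 2)
      (∫ θ in (-(π/2))..(π/2), f (s * cos θ) * cos θ ^ 2) s := by
  let F : ℝ → ℝ := fun x => ∫ u in (0 : ℝ)..x, f u
  have hF : ∀ x, HasDerivAt F (f x) x := fun x => hf.integral_hasStrictDerivAt 0 x |>.hasDerivAt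
  have h := (hasDerivAt_integral_comp_mul_cos_mul_cos hf hF s).sub_const (2 * F 0)
  simpa only [integral_comp_mul_cos_mul_cos_eq hf hF, add_sub_cancel_left] using h

end PrimitiveAlongCos

theorem stmt_6_general (ν : ℝ → ℝ) (hν : ContDiff ℝ 1 ν)
    (hpos : ∀ x, 0 < ν x) (s : ℝ) :
    (-(3/2) * s * ∫ θ in (-(π/2))..(π/2),
        (deriv ν (s * cos θ) / ν (s * cos θ) ^ 4) * cos θ ^ 2)
      = s * deriv (fun t : ℝ =>
          1 - (3/2) * t * ∫ θ in (-(π/2))..(π/2),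
            (deriv ν (t * cos θ) / ν (t * cos θ) ^ 4) * sin θ ^ 2) s := by
  have hf : Continuous fun x => deriv ν x / ν x ^ 4 :=
    (hν.continuous_deriv le_rfl).div (hν.continuous.pow 4) fun x => pow_ne_zero _ (hpos x).ne'
  have hg := ((hasDerivAt_mul_integral_comp_mul_cos_mul_sin_sq hf s).const_mul (3/2)).const_sub 1
  simp only [← mul_assoc] at hg
  rw [hg.deriv]
  ring

theorem stmt_6 (ν : ℝ → ℝ) (hν : ContDiff ℝ 1 ν) (heven : ∀ x, ν (-x) = ν x)
    (hpos : ∀ x, 0 < ν x) (hmono : MonotoneOn ν (Set.Ici 0)) (s : ℝ) (hs : 0 < s) :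
    (-(3/2) * s * ∫ θ in (-(π/2))..(π/2),
        (deriv ν (s * cos θ) / ν (s * cos θ) ^ 4) * cos θ ^ 2)
      = s * deriv (fun t : ℝ =>
          1 - (3/2) * t * ∫ θ in (-(π/2))..(π/2),
            (deriv ν (t * cos θ) / ν (t * cos θ) ^ 4) * sin θ ^ 2) s :=
  stmt_6_general ν hν hpos s
end

section
/- For the L² amoeba metric ν(s)=√(1+s²) and contrast parameter β>0, the edge-stopping function g(s) = 1 − (3/2)·βs·∫_{−π/2}^{π/2} (ν'(βs·cosθ)/ν(βs·cosθ)⁴)·sin²θ dθ equals the Perona–Malik function 1/(1+β²s²) for all s ≥ 0. -/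
/-!
With `a = βs` the integrand is `a cos θ sin² θ / (1 + a² cos² θ)^{5/2}`, which has the
elementary antiderivative `a sin³ θ / (3 (1 + a²) (1 + a² cos² θ)^{3/2})`. Evaluating it at
`±π/2` gives the integral `2a / (3 (1 + a²))`, and then `1 - (3/2) a · 2a / (3 (1 + a²))`
simplifies to `1 / (1 + a²)`.
-/

open Real

lemma hasDerivAt_amoeba_antideriv (a θ : ℝ) :
    HasDerivAt
      (fun θ => a * sin θ ^ 3 /
        (3 * (1 + a ^ 2) * ((1 + (a * cos θ) ^ 2) * √(1 + (a * cos θ) ^ 2))))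
      ((a * cos θ / √(1 + (a * cos θ) ^ 2)) / √(1 + (a * cos θ) ^ 2) ^ 4 * sin θ ^ 2) θ := by
  have hq_pos : 0 < 1 + (a * cos θ) ^ 2 := by positivity
  have hq : HasDerivAt (fun θ => 1 + (a * cos θ) ^ 2)
      (2 * (a * cos θ) ^ 1 * (a * -sin θ)) θ :=
    (((hasDerivAt_cos θ).const_mul a).pow 2).const_add 1
  have hden := (hq.mul (hq.sqrt hq_pos.ne')).const_mul (3 * (1 + a ^ 2))
  have hnum := ((hasDerivAt_sin θ).pow 3).const_mul a
  have hden_ne : 3 * (1 + a ^ 2) * ((1 + (a * cos θ) ^ 2) * √(1 + (a * cos θ) ^ 2)) ≠ 0 := by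
    positivity
  have hquot : HasDerivAt
      (fun θ => a * sin θ ^ 3 /
        (3 * (1 + a ^ 2) * ((1 + (a * cos θ) ^ 2) * √(1 + (a * cos θ) ^ 2)))) _ θ :=
    hnum.div hden hden_ne
  refine hquot.congr_deriv ?_
  simp only [Pi.pow_apply, Nat.cast_ofNat, Nat.reduceSub, pow_one]
  have hsin_sq : sin θ ^ 2 = 1 - cos θ ^ 2 := by linarith [sin_sq_add_cos_sq θ]
  have hsin_cube : sin θ ^ 3 = (1 - cos θ ^ 2) * sin θ := by rw [pow_succ, hsin_sq]
  rw [hsin_cube, hsin_sq]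
  set r := √(1 + (a * cos θ) ^ 2)
  have hr_pos : 0 < r := sqrt_pos.2 hq_pos
  have hr_sq : 1 + (a * cos θ) ^ 2 = r ^ 2 := (sq_sqrt hq_pos.le).symm
  rw [hr_sq]
  field_simp
  linear_combination -3 * a * cos θ * (1 - cos θ ^ 2) * hr_sq
    + 3 * a ^ 3 * cos θ * (1 - cos θ ^ 2) * hsin_sq

lemma continuous_amoeba_integrand (a : ℝ) :
    Continuous fun θ =>
      (a * cos θ / √(1 + (a * cos θ) ^ 2)) / √(1 + (a * cos θ) ^ 2) ^ 4 * sin θ ^ 2 := by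
  have hr_ne : ∀ θ, √(1 + (a * cos θ) ^ 2) ≠ 0 := fun θ => (sqrt_pos.2 (by positivity)).ne'
  have hr : Continuous fun θ => √(1 + (a * cos θ) ^ 2) := by fun_prop
  exact (((by fun_prop : Continuous fun θ => a * cos θ).div hr hr_ne).div (hr.pow 4)
    fun θ => pow_ne_zero _ (hr_ne θ)).mul (by fun_prop)

lemma integral_amoeba_integrand (a : ℝ) :
    ∫ θ in (-(π / 2))..(π / 2),
        (a * cos θ / √(1 + (a * cos θ) ^ 2)) / √(1 + (a * cos θ) ^ 2) ^ 4 * sin θ ^ 2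
      = 2 * a / (3 * (1 + a ^ 2)) := by
  rw [intervalIntegral.integral_eq_sub_of_hasDerivAt
    (fun θ _ => hasDerivAt_amoeba_antideriv a θ)
    ((continuous_amoeba_integrand a).intervalIntegrable _ _)]
  have : 0 < 1 + a ^ 2 := by positivity
  simp only [sin_neg, cos_neg, sin_pi_div_two, cos_pi_div_two]
  norm_num
  field_simp
  ring

theorem stmt_9_general (β : ℝ) (s : ℝ) :
    1 - (3/2) * (β * s) * ∫ θ in (-(π/2))..(π/2),
        ((β * s * cos θ / Real.sqrt (1 + (β * s * cos θ) ^ 2)) /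
          (Real.sqrt (1 + (β * s * cos θ) ^ 2)) ^ 4) * sin θ ^ 2
      = 1 / (1 + β ^ 2 * s ^ 2) := by
  rw [integral_amoeba_integrand (β * s)]
  have : 0 < 1 + (β * s) ^ 2 := by positivity
  field_simp
  ring

theorem stmt_9 (β : ℝ) (hβ : 0 < β) (s : ℝ) (hs : 0 ≤ s) :
    1 - (3/2) * (β * s) * ∫ θ in (-(π/2))..(π/2),
        ((β * s * cos θ / Real.sqrt (1 + (β * s * cos θ) ^ 2)) /
          (Real.sqrt (1 + (β * s * cos θ) ^ 2)) ^ 4) * sin θ ^ 2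
      = 1 / (1 + β ^ 2 * s ^ 2) :=
  stmt_9_general β s
end

section
/- For 0 ≤ α ≤ π and s ≥ 0, ∫_{α−π/2}^{α+π/2} (sin²θ·sgn(cosθ))/(1+s·|cosθ|)⁴ dθ = ∫_{−π/2+α}^{π/2−α} sin²θ/(1+s·cosθ)⁴ dθ. -/
/-!
On `(-π/2, π/2)` we have `sign (cos θ) = 1`, so the integrand is `g θ = sin² θ / (1 + s cos θ)⁴`;
on `(π/2, 3π/2)` we have `sign (cos θ) = -1`, and since `sin` and `|cos|` are invariant under
`θ ↦ π - θ` the integrand equals `-g (π - θ)`. Splitting the integral at `π/2` and reflecting the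
second piece gives `∫_{α-π/2}^{π/2} g - ∫_{π/2-α}^{π/2} g = ∫_{α-π/2}^{π/2-α} g`.
-/

open Real MeasureTheory intervalIntegral Set

theorem integral_eq_of_eqOn_of_eqOn_neg_reflect {F G : ℝ → ℝ} {a b c : ℝ}
    (hGa : IntervalIntegrable G volume a (c / 2))
    (hGb : IntervalIntegrable G volume (c - b) (c / 2))
    (hFG : EqOn F G (uIoo a (c / 2)))
    (hFG' : EqOn F (fun θ => -G (c - θ)) (uIoo (c / 2) b)) :
    ∫ θ in a..b, F θ = ∫ θ in a..(c - b), G θ := by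
  have hGb' : IntervalIntegrable (fun θ => -G (c - θ)) volume (c / 2) b := by
    have := (hGb.comp_sub_left c).neg.symm
    rwa [sub_sub_cancel, show c - c / 2 = c / 2 by ring] at this
  have hFa := hGa.congr_uIoo hFG.symm
  have hFb := hGb'.congr_uIoo hFG'.symm
  calc ∫ θ in a..b, F θ
      = (∫ θ in a..(c / 2), F θ) + ∫ θ in (c / 2)..b, F θ :=
        (integral_add_adjacent_intervals hFa hFb).symm
    _ = (∫ θ in a..(c / 2), G θ) + ∫ θ in (c / 2)..b, -G (c - θ) := by
        rw [integral_congr_uIoo hFG, integral_congr_uIoo hFG']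
    _ = (∫ θ in a..(c / 2), G θ) + ∫ θ in (c / 2)..(c - b), G θ := by
        rw [intervalIntegral.integral_neg, integral_comp_sub_left,
          show c - c / 2 = c / 2 by ring, ← integral_symm]
    _ = ∫ θ in a..(c - b), G θ :=
        integral_add_adjacent_intervals hGa hGb.symm

theorem continuousOn_sin_sq_div_one_add_mul_cos_pow {s : ℝ} (hs : 0 ≤ s) (n : ℕ) :
    ContinuousOn (fun θ => sin θ ^ 2 / (1 + s * cos θ) ^ n) (Icc (-(π / 2)) (π / 2)) := by
  refine ContinuousOn.div (by fun_prop) (by fun_prop) fun θ hθ => ?_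
  have := cos_nonneg_of_mem_Icc hθ
  positivity

theorem sin_sq_mul_sign_cos_div_eqOn_cos_pos (s : ℝ) (n : ℕ) :
    EqOn (fun θ => sin θ ^ 2 * Real.sign (cos θ) / (1 + s * |cos θ|) ^ n)
      (fun θ => sin θ ^ 2 / (1 + s * cos θ) ^ n) (Ioo (-(π / 2)) (π / 2)) := by
  intro θ hθ
  have hcos := cos_pos_of_mem_Ioo hθ
  simp only [Real.sign_of_pos hcos, abs_of_pos hcos, mul_one]

theorem sin_sq_mul_sign_cos_div_eqOn_cos_neg (s : ℝ) (n : ℕ) :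
    EqOn (fun θ => sin θ ^ 2 * Real.sign (cos θ) / (1 + s * |cos θ|) ^ n)
      (fun θ => -(sin (π - θ) ^ 2 / (1 + s * cos (π - θ)) ^ n)) (Ioo (π / 2) (π + π / 2)) := by
  intro θ hθ
  have hcos := cos_neg_of_pi_div_two_lt_of_lt hθ.1 hθ.2
  simp only [Real.sign_of_neg hcos, abs_of_neg hcos, sin_pi_sub, cos_pi_sub]
  ring

theorem stmt_10 (s α : ℝ) (hs : 0 ≤ s) (hα0 : 0 ≤ α) (hαπ : α ≤ π) :
    ∫ θ in (α - π/2)..(α + π/2),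
        sin θ ^ 2 * Real.sign (cos θ) / (1 + s * |cos θ|) ^ 4
      = ∫ θ in (-(π/2) + α)..(π/2 - α), sin θ ^ 2 / (1 + s * cos θ) ^ 4 := by
  have hπ := pi_pos
  have hGint : ∀ x ∈ Icc (-(π / 2)) (π / 2),
      IntervalIntegrable (fun θ => sin θ ^ 2 / (1 + s * cos θ) ^ 4) volume x (π / 2) :=
    fun x hx => ((continuousOn_sin_sq_div_one_add_mul_cos_pow hs 4).mono
      (uIcc_subset_Icc hx (right_mem_Icc.2 (by linarith)))).intervalIntegrable
  rw [neg_add_eq_sub, show π / 2 - α = π - (α + π / 2) by ring]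
  refine integral_eq_of_eqOn_of_eqOn_neg_reflect (hGint _ ⟨by linarith, by linarith⟩)
    (hGint _ ⟨by linarith, by linarith⟩) ?_ ?_
  · refine (sin_sq_mul_sign_cos_div_eqOn_cos_pos s 4).mono ?_
    rw [uIoo_of_le (by linarith)]
    exact Ioo_subset_Ioo_left (by linarith)
  · refine (sin_sq_mul_sign_cos_div_eqOn_cos_neg s 4).mono ?_
    rw [uIoo_of_le (by linarith)]
    exact Ioo_subset_Ioo_right (by linarith)
end

section
/- For s ≥ 0 and β > 0, the expression 3·∫_0^{π/2} sin²θ·cosθ/ν(βs cosθ)³ dθ with ν(t)=√(1+t²) equals 1/2 + (1/2)·∫_0^{π/2} cosθ/ν(βs cosθ)³ dθ + (3/2)·βs·∫_0^{π/2} (ν'(βs cosθ)/ν(βs cosθ)⁴)·sin²θ·cos(2θ) dθ, where ν'(t)=t/√(1+t²). -/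
/-!
Write `ν θ = nuCos a θ = √(1 + (a cos θ)²)`, the paper's `ν(a cos θ)` with `a = βs`.
Integrating the derivative of `sin^(n+1) θ / ν θ³` over `[0, π/2]`, where the boundary term is `1` because `sin 0 = 0` and `sin (π/2) = ν (π/2) = 1`, gives
`(n+1) ∫ sinⁿ cos / ν³ + 3a² ∫ sin^(n+2) cos / ν⁵ = 1` for every `n`.
The cases `n = 0` and `n = 2` eliminate the `ν⁻⁵` integrals from the right-hand side of the theorem,
once `cos 2θ = 1 - 2 sin² θ` splits its last integral into them.
-/

open Real intervalIntegral

noncomputable def nuCos (a θ : ℝ) : ℝ := √(1 + (a * cos θ) ^ 2)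

namespace nuCos

variable (a : ℝ)

lemma pos (θ : ℝ) : 0 < nuCos a θ := sqrt_pos.2 (by positivity)

lemma continuous : Continuous (nuCos a) := by
  unfold nuCos; fun_prop

lemma pi_div_two : nuCos a (π / 2) = 1 := by
  simp [nuCos]

lemma hasDerivAt (θ : ℝ) :
    HasDerivAt (nuCos a) (-(a ^ 2 * sin θ * cos θ) / nuCos a θ) θ := by
  have hinner : HasDerivAt (fun θ => 1 + (a * cos θ) ^ 2) (-(2 * a ^ 2 * sin θ * cos θ)) θ :=
    ((((hasDerivAt_cos θ).const_mul a).fun_pow 2).const_add 1).congr_deriv (by push_cast; ring)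
  refine (hinner.sqrt (by positivity)).congr_deriv ?_
  unfold nuCos
  field_simp

lemma continuous_div_pow {f : ℝ → ℝ} (hf : Continuous f) (k : ℕ) :
    Continuous fun θ => f θ / nuCos a θ ^ k :=
  hf.div ((continuous a).pow k) fun θ => (pow_pos (pos a θ) k).ne'

lemma hasDerivAt_sin_pow_div_pow_three (n : ℕ) (θ : ℝ) :
    HasDerivAt (fun θ => sin θ ^ (n + 1) / nuCos a θ ^ 3)
      ((n + 1) * (sin θ ^ n * cos θ / nuCos a θ ^ 3)
        + 3 * a ^ 2 * (sin θ ^ (n + 2) * cos θ / nuCos a θ ^ 5)) θ := by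
  have hν := pos a θ
  refine (((hasDerivAt_sin θ).fun_pow (n + 1)).div ((hasDerivAt a θ).fun_pow 3)
    (pow_pos hν 3).ne').congr_deriv ?_
  simp only [Nat.add_sub_cancel]
  field_simp
  push_cast
  ring

lemma integral_sin_pow_mul_cos (n : ℕ) :
    (n + 1) * (∫ θ in (0 : ℝ)..π / 2, sin θ ^ n * cos θ / nuCos a θ ^ 3)
      + 3 * a ^ 2 * (∫ θ in (0 : ℝ)..π / 2, sin θ ^ (n + 2) * cos θ / nuCos a θ ^ 5) = 1 := by
  have hc₁ := continuous_div_pow a (f := fun θ => sin θ ^ n * cos θ) (by fun_prop) 3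
  have hc₂ := continuous_div_pow a (f := fun θ => sin θ ^ (n + 2) * cos θ) (by fun_prop) 5
  have hftc := integral_eq_sub_of_hasDerivAt (a := 0) (b := π / 2)
    (fun θ _ => hasDerivAt_sin_pow_div_pow_three a n θ)
    (((hc₁.const_mul _).add (hc₂.const_mul _)).intervalIntegrable _ _)
  rw [integral_add ((hc₁.const_mul _).intervalIntegrable _ _)
    ((hc₂.const_mul _).intervalIntegrable _ _), integral_const_mul, integral_const_mul] at hftc
  simpa [pi_div_two] using hftc

lemma integral_mul_cos_two_mul :
    (∫ θ in (0 : ℝ)..π / 2, (a * cos θ / nuCos a θ) / nuCos a θ ^ 4 * sin θ ^ 2 * cos (2 * θ))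
      = a * (∫ θ in (0 : ℝ)..π / 2, sin θ ^ 2 * cos θ / nuCos a θ ^ 5)
        - 2 * a * (∫ θ in (0 : ℝ)..π / 2, sin θ ^ 4 * cos θ / nuCos a θ ^ 5) := by
  have hc₂ := continuous_div_pow a (f := fun θ => sin θ ^ 2 * cos θ) (by fun_prop) 5
  have hc₄ := continuous_div_pow a (f := fun θ => sin θ ^ 4 * cos θ) (by fun_prop) 5
  rw [← integral_const_mul, ← integral_const_mul, ← integral_sub
    ((hc₂.const_mul _).intervalIntegrable _ _) ((hc₄.const_mul _).intervalIntegrable _ _)]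
  refine integral_congr fun θ _ => ?_
  have hν := pos a θ
  simp only [cos_two_mul, cos_sq']
  field_simp
  ring

end nuCos

theorem stmt_18_general (β s : ℝ) :
    3 * ∫ θ in (0:ℝ)..(π/2),
        sin θ ^ 2 * cos θ / (Real.sqrt (1 + (β * s * cos θ) ^ 2)) ^ 3
      = 1/2
        + (1/2) * (∫ θ in (0:ℝ)..(π/2),
            cos θ / (Real.sqrt (1 + (β * s * cos θ) ^ 2)) ^ 3)
        + (3/2) * (β * s) * ∫ θ in (0:ℝ)..(π/2),
            ((β * s * cos θ / Real.sqrt (1 + (β * s * cos θ) ^ 2)) /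
              (Real.sqrt (1 + (β * s * cos θ) ^ 2)) ^ 4) * sin θ ^ 2 * cos (2 * θ) := by
  simp only [show ∀ θ, √(1 + (β * s * cos θ) ^ 2) = nuCos (β * s) θ from fun _ => rfl]
  have h₀ := nuCos.integral_sin_pow_mul_cos (β * s) 0
  have h₂ := nuCos.integral_sin_pow_mul_cos (β * s) 2
  norm_num at h₀ h₂
  rw [nuCos.integral_mul_cos_two_mul]
  linear_combination h₂ - h₀ / 2

theorem stmt_18 (β s : ℝ) (hβ : 0 < β) (hs : 0 ≤ s) :
    3 * ∫ θ in (0:ℝ)..(π/2),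
        sin θ ^ 2 * cos θ / (Real.sqrt (1 + (β * s * cos θ) ^ 2)) ^ 3
      = 1/2
        + (1/2) * (∫ θ in (0:ℝ)..(π/2),
            cos θ / (Real.sqrt (1 + (β * s * cos θ) ^ 2)) ^ 3)
        + (3/2) * (β * s) * ∫ θ in (0:ℝ)..(π/2),
            ((β * s * cos θ / Real.sqrt (1 + (β * s * cos θ) ^ 2)) /
              (Real.sqrt (1 + (β * s * cos θ) ^ 2)) ^ 4) * sin θ ^ 2 * cos (2 * θ) :=
  stmt_18_general β s
end
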